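/- Let z ∈ ℂ with Im z ≠ 0. Let φ be the solution of the Schrödinger equation with spectral parameter z on [0,∞) with φ(0) = 0 and φ'(0) = 1, and let θ be a solution of the Schrödinger equation with spectral parameter z on [0,∞) that is square integrable on (0,∞) and satisfies w := p(0)·θ(0) ≠ 0 (equivalently, the Wronskian p(x)(φ'(x)θ(x) − φ(x)θ'(x)) equals w for all x). Let g : [0,∞) → ℂ be continuous with compact support, and define f(x) = w⁻¹·(φ(x)·∫ₓ^∞ θ(y)g(y) dy + θ(x)·∫₀ˣ φ(y)g(y) dy). Then f(0) = 0, f and p·f' are locally absolutely continuous on [0,∞), −(p(x)f'(x))' + q(x)f(x) − z·f(x) = g(x) for almost every x > 0, and f is square integrable on (0,∞). -/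

import Mathlib

open MeasureTheory Filter Set Complex

noncomputable section

/-- The principal-branch square root `ω(x,z) = ((q x − z)/p x)^{1/2}`. -/
def omg (p q : ℝ → ℝ) (z : ℂ) (x : ℝ) : ℂ :=
  (((q x : ℂ) - z) / (p x : ℂ)) ^ (1 / 2 : ℂ)

/-- `Ω(x,z) = ∫₀ˣ ω(y,z) dy`. -/
def Omg (p q : ℝ → ℝ) (z : ℂ) (x : ℝ) : ℂ :=
  ∫ y in (0:ℝ)..x, omg p q z y

/-- `a(x,z) = exp(−Ω(x,z))`. -/
def aa (p q : ℝ → ℝ) (z : ℂ) (x : ℝ) : ℂ :=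
  Complex.exp (-(Omg p q z x))

/-- Assumption (PQ): `p > 0` on `[0,∞)`, locally absolutely continuous with integrable
derivative `p'` and limit `p₀ > 0` at `+∞`; `q` integrable on `(0,x₀)`, locally absolutely
continuous on `[x₀,∞)` with integrable derivative `q'` there, and `q → 0` at `+∞`.
Absolute continuity is encoded by the fundamental theorem of calculus representation. -/
structure PQData (p p' q q' : ℝ → ℝ) (p₀ x₀ : ℝ) : Prop where
  p_pos : ∀ x : ℝ, 0 ≤ x → 0 < p x
  hp₀ : 0 < p₀
  hx₀ : 0 ≤ x₀
  p_ac : ∀ x : ℝ, 0 ≤ x → p x = p 0 + ∫ t in (0:ℝ)..x, p' t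
  p'_int : IntegrableOn p' (Ioi (0:ℝ))
  p_lim : Tendsto p atTop (nhds p₀)
  q_int : IntegrableOn q (Ioo (0:ℝ) x₀)
  q_ac : ∀ x : ℝ, x₀ ≤ x → q x = q x₀ + ∫ t in x₀..x, q' t
  q'_int : IntegrableOn q' (Ioi x₀)
  q_lim : Tendsto q atTop (nhds (0:ℝ))

/-- `f` (with derivative `f'`) solves `−(p f')' + q f = z f` on `I`:
`f` is differentiable on `I` with derivative `f'`, and `p·f'` is locally absolutely
continuous on `I` with a.e. derivative `(q − z)·f` (encoded via the FTC representation). -/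
def IsSol (p q : ℝ → ℝ) (z : ℂ) (I : Set ℝ) (f f' : ℝ → ℂ) : Prop :=
  (∀ x ∈ I, HasDerivWithinAt f (f' x) I x) ∧
    ∀ x ∈ I, ∀ y ∈ I,
      (p y : ℂ) * f' y - (p x : ℂ) * f' x = ∫ t in x..y, ((q t : ℂ) - z) * f t

/-- `ε(x) = ∫ₓ^∞ (|p'| + |q'|)`. -/
def eps (p' q' : ℝ → ℝ) (x : ℝ) : ℝ :=
  ∫ y in Ioi x, (|p' y| + |q' y|)

/-- The Volterra kernel `G(x,y,z) = a(y,z)² ∫ₓ^y p(s)⁻¹ a(s,z)⁻² ds`. -/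
def Gker (p q : ℝ → ℝ) (z : ℂ) (x y : ℝ) : ℂ :=
  aa p q z y ^ 2 * ∫ s in x..y, ((p s : ℂ))⁻¹ * (aa p q z s ^ 2)⁻¹

/-- `Φ(x,λ) = ∫₀ˣ √(max((λ − q)/p, 0))`. -/
def Phi (p q : ℝ → ℝ) (lam x : ℝ) : ℝ :=
  ∫ y in (0:ℝ)..x, Real.sqrt (max ((lam - q y) / p y) 0)

/-- `K(λ) = exp(−∫₀^∞ √(max((q − λ)/p, 0)))`. -/
def Kc (p q : ℝ → ℝ) (lam : ℝ) : ℝ :=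
  Real.exp (-∫ y in Ioi (0:ℝ), Real.sqrt (max ((q y - lam) / p y) 0))

/-- `ξ(x) = θ(x)·∫_ϱ^x θ(y)⁻² p(y)⁻¹ dy`. -/
def xiFun (p : ℝ → ℝ) (θ : ℝ → ℂ) (ϱ x : ℝ) : ℂ :=
  θ x * ∫ y in ϱ..x, (θ y ^ 2)⁻¹ * ((p y : ℂ))⁻¹

/-- The derivative of `ξ`: `ξ'(x) = θ'(x)·∫_ϱ^x θ⁻² p⁻¹ + θ(x)⁻¹ p(x)⁻¹`. -/
def xiFun' (p : ℝ → ℝ) (θ θ' : ℝ → ℂ) (ϱ x : ℝ) : ℂ :=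
  θ' x * (∫ y in ϱ..x, (θ y ^ 2)⁻¹ * ((p y : ℂ))⁻¹) + (θ x)⁻¹ * ((p x : ℂ))⁻¹

/-- The resolvent applied to `g`:
`f(x) = w⁻¹(φ(x)∫ₓ^∞ θ g + θ(x)∫₀ˣ φ g)`. -/
def resOp (θ φ g : ℝ → ℂ) (w : ℂ) (x : ℝ) : ℂ :=
  w⁻¹ * (φ x * ∫ y in Ioi x, θ y * g y) +
    w⁻¹ * (θ x * ∫ y in (0:ℝ)..x, φ y * g y)

/-!
Write `f = w⁻¹ (φ A + θ B)` with `A x = ∫ₓ^∞ θ g` and `B x = ∫₀ˣ φ g`. Since `φ A' + θ B' = 0`,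
`f' = w⁻¹ (φ' A + θ' B)`, and differentiating `p f'` with the help of the equation gives
`(q - z) f - w⁻¹ g · p (φ' θ - φ θ')`. The Wronskian `p (φ' θ - φ θ')` is constant, equal to
`w = p(0) θ(0)` by the initial conditions of `φ`, so `-(p f')' + (q - z) f = g`. Since `p f'` is
only absolutely continuous, these differentiations are carried out on indefinite integrals,
through the product rule `∫ₓʸ (h v + u k) = [u v]ₓʸ` for `u = ∫ h`, `v = ∫ k`, which is Fubini's
theorem on the triangle `x ≤ s ≤ t ≤ y`. Beyond the support of `g`, `f` is a constant multiple
of `θ`, hence square integrable.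
-/

open intervalIntegral Topology

theorem Icc_mem_nhdsWithin_Ici_of_mem {a c x : ℝ} (hx : x ∈ Ico a c) : Icc a c ∈ 𝓝[Ici a] x :=
  mem_nhdsWithin.2 ⟨Iio c, isOpen_Iio, hx.2, fun _ ht => ⟨ht.2, ht.1.le⟩⟩

section HalfLine

variable {E : Type*} [NormedAddCommGroup E] {f : ℝ → E} {a : ℝ}

theorem MeasureTheory.LocallyIntegrableOn.intervalIntegrable_of_Ici
    (hf : LocallyIntegrableOn f (Ici a)) {b c : ℝ} (hb : a ≤ b) (hc : a ≤ c) :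
    IntervalIntegrable f volume b c :=
  (hf.integrableOn_compact_subset (fun _ ht => le_trans (le_min hb hc) ht.1)
    isCompact_uIcc).intervalIntegrable

theorem ContinuousOn.intervalIntegrable_of_Ici (hf : ContinuousOn f (Ici a)) {b c : ℝ}
    (hb : a ≤ b) (hc : a ≤ c) : IntervalIntegrable f volume b c :=
  (hf.locallyIntegrableOn measurableSet_Ici).intervalIntegrable_of_Ici hb hc

theorem MeasureTheory.LocallyIntegrableOn.continuousOn_primitive_Ici [NormedSpace ℝ E]
    (hf : LocallyIntegrableOn f (Ici a)) :
    ContinuousOn (fun x => ∫ t in a..x, f t) (Ici a) := fun x hx =>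
  (continuousWithinAt_primitive (measure_singleton x)
    (hf.intervalIntegrable_of_Ici (min_self a).ge (le_max_left a (x + 1)))).mono_of_mem_nhdsWithin
    (Icc_mem_nhdsWithin_Ici_of_mem ⟨hx, lt_add_one x⟩)

theorem ContinuousOn.hasDerivWithinAt_primitive_Ici [NormedSpace ℝ E] [CompleteSpace E]
    (hf : ContinuousOn f (Ici a)) {x : ℝ} (hx : x ∈ Ici a) :
    HasDerivWithinAt (fun u => ∫ t in a..u, f t) (f x) (Ici a) x := by
  have : Fact (x ∈ Icc a (x + 1)) := ⟨⟨hx, by linarith⟩⟩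
  exact (integral_hasDerivWithinAt_right (hf.intervalIntegrable_of_Ici le_rfl hx)
    ((hf.mono Icc_subset_Ici_self).stronglyMeasurableAtFilter_nhdsWithin measurableSet_Icc x)
    ((hf x hx).mono Icc_subset_Ici_self)).mono_of_mem_nhdsWithin
    (Icc_mem_nhdsWithin_Ici_of_mem ⟨hx, lt_add_one x⟩)

theorem sub_integral_Ioi_eq_integral_neg [NormedSpace ℝ E] (hf : IntegrableOn f (Ioi a))
    {x t : ℝ} (hx : a ≤ x) (hxt : x ≤ t) :
    (∫ y in Ioi t, f y) - ∫ y in Ioi x, f y = ∫ y in x..t, -f y := by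
  rw [intervalIntegral.integral_neg, ← integral_Ioi_sub_Ioi (hf.mono_set (Ioi_subset_Ioi hx)) hxt,
    neg_sub]

theorem integrableOn_Ioi_of_continuousOn_Icc {R : ℝ} (haR : a ≤ R)
    (hc : ContinuousOn f (Icc a R)) (hR : IntegrableOn f (Ioi R)) :
    IntegrableOn f (Ioi a) := by
  rw [← Ioc_union_Ioi_eq_Ioi haR]
  exact (hc.integrableOn_Icc.mono_set Ioc_subset_Icc_self).union hR

end HalfLine

section ProductRule

variable {𝕜 : Type*} [RCLike 𝕜] {u v h k : ℝ → 𝕜} {x y : ℝ}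

theorem integral_primitive_mul_swap (hxy : x ≤ y) (hh : IntervalIntegrable h volume x y)
    (hk : IntervalIntegrable k volume x y) :
    ∫ t in x..y, (∫ s in x..t, h s) * k t = ∫ s in x..y, h s * ∫ t in s..y, k t := by
  rw [intervalIntegrable_iff_integrableOn_Ioc_of_le hxy] at hh hk
  set μ := volume.restrict (Ioc x y)
  set T : Set (ℝ × ℝ) := {p | p.2 ≤ p.1}
  set F : ℝ × ℝ → 𝕜 := fun p => k p.1 * h p.2
  have hint : Integrable (T.indicator F) (μ.prod μ) :=
    (hk.mul_prod hh).indicator (measurableSet_le measurable_snd measurable_fst)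
  rw [integral_of_le hxy, integral_of_le hxy]
  calc ∫ t in Ioc x y, (∫ s in x..t, h s) * k t
      = ∫ t, ∫ s, T.indicator F (t, s) ∂μ ∂μ := by
        refine setIntegral_congr_fun measurableSet_Ioc fun t ht => ?_
        have hslice : (fun s => T.indicator F (t, s)) = (Iic t).indicator (fun s => k t * h s) := by
          ext s; by_cases hst : s ≤ t <;> simp [T, F, hst]
        have hset : Iic t ∩ Ioc x y = Ioc x t := by
          rw [inter_comm, Ioc_inter_Iic, min_eq_right ht.2]
        rw [hslice, MeasureTheory.integral_indicator measurableSet_Iic,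
          Measure.restrict_restrict measurableSet_Iic, hset, MeasureTheory.integral_const_mul,
          integral_of_le ht.1.le, mul_comm]
    _ = ∫ s, ∫ t, T.indicator F (t, s) ∂μ ∂μ := integral_integral_swap hint
    _ = ∫ s in Ioc x y, h s * ∫ t in s..y, k t := by
        refine setIntegral_congr_fun measurableSet_Ioc fun s hs => ?_
        have hslice : (fun t => T.indicator F (t, s)) = (Ici s).indicator (fun t => k t * h s) := by
          ext t; by_cases hst : s ≤ t <;> simp [T, F, hst]
        have hset : Ici s ∩ Ioc x y = Icc s y := by
          ext t
          simp only [mem_inter_iff, mem_Ici, mem_Ioc, mem_Icc]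
          exact ⟨fun h' => ⟨h'.1, h'.2.2⟩, fun h' => ⟨h'.1, hs.1.trans_le h'.1, h'.2⟩⟩
        rw [hslice, MeasureTheory.integral_indicator measurableSet_Ici,
          Measure.restrict_restrict measurableSet_Ici, hset, MeasureTheory.integral_mul_const,
          integral_Icc_eq_integral_Ioc, ← integral_of_le hs.2, mul_comm]

theorem continuousOn_Icc_of_sub_eq_integral (hxy : x ≤ y) (hh : IntervalIntegrable h volume x y)
    (hu : ∀ t ∈ Icc x y, u t - u x = ∫ s in x..t, h s) : ContinuousOn u (Icc x y) := by
  have hprim := continuousOn_primitive_interval' hh left_mem_uIcc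
  rw [uIcc_of_le hxy] at hprim
  exact (continuousOn_const (c := u x)).add hprim |>.congr fun t ht => by
    show u t = u x + ∫ s in x..t, h s
    rw [← hu t ht, add_sub_cancel]

theorem intervalIntegrable_mul_add_mul_of_sub_eq_integral (hxy : x ≤ y)
    (hh : IntervalIntegrable h volume x y) (hk : IntervalIntegrable k volume x y)
    (hu : ∀ t ∈ Icc x y, u t - u x = ∫ s in x..t, h s)
    (hv : ∀ t ∈ Icc x y, v t - v x = ∫ s in x..t, k s) :
    IntervalIntegrable (fun t => h t * v t + u t * k t) volume x y := by
  have huc := continuousOn_Icc_of_sub_eq_integral hxy hh hu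
  have hvc := continuousOn_Icc_of_sub_eq_integral hxy hk hv
  rw [← uIcc_of_le hxy] at huc hvc
  exact (hh.mul_continuousOn hvc).add (hk.continuousOn_mul huc)

theorem integral_mul_add_mul_eq_sub_of_sub_eq_integral (hxy : x ≤ y)
    (hh : IntervalIntegrable h volume x y) (hk : IntervalIntegrable k volume x y)
    (hu : ∀ t ∈ Icc x y, u t - u x = ∫ s in x..t, h s)
    (hv : ∀ t ∈ Icc x y, v t - v x = ∫ s in x..t, k s) :
    ∫ t in x..y, (h t * v t + u t * k t) = u y * v y - u x * v x := by
  have huc := continuousOn_Icc_of_sub_eq_integral hxy hh hu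
  have hvc := continuousOn_Icc_of_sub_eq_integral hxy hk hv
  rw [← uIcc_of_le hxy] at huc hvc
  have hhv : IntervalIntegrable (fun t => h t * v t) volume x y := hh.mul_continuousOn hvc
  have huk : IntervalIntegrable (fun t => u t * k t) volume x y := hk.continuousOn_mul huc
  have hprim : IntervalIntegrable (fun t => (∫ s in x..t, h s) * k t) volume x y :=
    hk.continuousOn_mul (continuousOn_primitive_interval' hh left_mem_uIcc)
  have htail : ∀ s ∈ uIcc x y, ∫ t in s..y, k t = v y - v s := fun s hs => by
    rw [← integral_interval_sub_left hk (hk.mono_set (uIcc_subset_uIcc left_mem_uIcc hs)),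
      ← hv y ⟨hxy, le_rfl⟩, ← hv s (by rwa [uIcc_of_le hxy] at hs), sub_sub_sub_cancel_right]
  have huk_eq : ∫ t in x..y, u t * k t
      = u x * (v y - v x) + ∫ s in x..y, (h s * v y - h s * v s) := by
    calc ∫ t in x..y, u t * k t
        = ∫ t in x..y, (u x * k t + (∫ s in x..t, h s) * k t) :=
          integral_congr fun t ht => by
            rw [uIcc_of_le hxy] at ht
            rw [← hu t ht]; ring
      _ = u x * (v y - v x) + ∫ s in x..y, h s * ∫ t in s..y, k t := by
          rw [integral_add (hk.const_mul _) hprim, intervalIntegral.integral_const_mul,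
            integral_primitive_mul_swap hxy hh hk, ← hv y ⟨hxy, le_rfl⟩]
      _ = u x * (v y - v x) + ∫ s in x..y, (h s * v y - h s * v s) := by
          rw [integral_congr fun s hs => by rw [htail s hs, mul_sub]]
  rw [integral_add hhv huk, huk_eq, integral_sub (hh.mul_const _) hhv,
    intervalIntegral.integral_mul_const, ← hu y ⟨hxy, le_rfl⟩]
  ring

end ProductRule

namespace PQData

variable {p p' q q' : ℝ → ℝ} {p₀ x₀ : ℝ}

theorem continuousOn_p (hPQ : PQData p p' q q' p₀ x₀) : ContinuousOn p (Ici 0) :=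
  (continuousOn_const.add ((integrableOn_Ici_iff_integrableOn_Ioi).2
    hPQ.p'_int).locallyIntegrableOn.continuousOn_primitive_Ici).congr hPQ.p_ac

theorem locallyIntegrableOn_q (hPQ : PQData p p' q q' p₀ x₀) : LocallyIntegrableOn q (Ici 0) := by
  have hqc : ContinuousOn q (Ici x₀) :=
    (continuousOn_const.add ((integrableOn_Ici_iff_integrableOn_Ioi).2
      hPQ.q'_int).locallyIntegrableOn.continuousOn_primitive_Ici).congr hPQ.q_ac
  intro x hx
  set M := max x₀ x + 1
  have hM : x₀ ≤ M := by linarith [le_max_left x₀ x]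
  refine ⟨Icc 0 M, Icc_mem_nhdsWithin_Ici_of_mem ⟨hx, by linarith [le_max_right x₀ x]⟩, ?_⟩
  rw [← Icc_union_Icc_eq_Icc hPQ.hx₀ hM]
  exact ((integrableOn_Icc_iff_integrableOn_Ioo).2 hPQ.q_int).union
    (hqc.mono Icc_subset_Ici_self).integrableOn_Icc

end PQData

namespace IsSol

variable {p q : ℝ → ℝ} {z : ℂ} {f f' g g' : ℝ → ℂ}

theorem continuousOn (hf : IsSol p q z (Ici 0) f f') : ContinuousOn f (Ici 0) :=
  fun x hx => (hf.1 x hx).continuousWithinAt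

theorem locallyIntegrableOn_potential_mul (hq : LocallyIntegrableOn q (Ici 0))
    (hf : IsSol p q z (Ici 0) f f') :
    LocallyIntegrableOn (fun t => ((q t : ℂ) - z) * f t) (Ici 0) := by
  have hqC : LocallyIntegrableOn (fun t => (q t : ℂ)) (Ici 0) := fun x hx =>
    let ⟨s, hs, hqs⟩ := hq x hx
    ⟨s, hs, hqs.ofReal⟩
  exact (hqC.sub (locallyIntegrableOn_const z)).mul_continuousOn hf.continuousOn
    isClosed_Ici.isLocallyClosed

theorem continuousOn_deriv (hp : ContinuousOn p (Ici 0)) (hp0 : ∀ x ∈ Ici (0:ℝ), p x ≠ 0)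
    (hq : LocallyIntegrableOn q (Ici 0)) (hf : IsSol p q z (Ici 0) f f') :
    ContinuousOn f' (Ici 0) := by
  have hpf' : ContinuousOn (fun x => (p x : ℂ) * f' x) (Ici 0) :=
    ((continuousOn_const (c := (p 0 : ℂ) * f' 0)).add
      (hf.locallyIntegrableOn_potential_mul hq).continuousOn_primitive_Ici).congr fun x hx => by
        simp only [Pi.add_apply]
        linear_combination hf.2 0 self_mem_Ici x hx
  refine ((continuous_ofReal.comp_continuousOn hp).inv₀ fun x hx => ?_).mul hpf' |>.congr
    fun x hx => ?_
  · exact ofReal_ne_zero.2 (hp0 x hx)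
  · simp [ofReal_ne_zero.2 (hp0 x hx)]

theorem sub_eq_integral_deriv (hp : ContinuousOn p (Ici 0)) (hp0 : ∀ x ∈ Ici (0:ℝ), p x ≠ 0)
    (hq : LocallyIntegrableOn q (Ici 0)) (hf : IsSol p q z (Ici 0) f f') {x t : ℝ}
    (hx : 0 ≤ x) (hxt : x ≤ t) : f t - f x = ∫ s in x..t, f' s :=
  (integral_eq_sub_of_hasDeriv_right_of_le hxt
    (hf.continuousOn.mono fun _ (hs : _ ∈ Icc x t) => hx.trans hs.1)
    (fun s hs => ((hf.1 s (hx.trans hs.1.le)).hasDerivAt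
      (Ici_mem_nhds (hx.trans_lt hs.1))).hasDerivWithinAt)
    (ContinuousOn.intervalIntegrable_of_Icc hxt
      ((hf.continuousOn_deriv hp hp0 hq).mono fun _ hs => hx.trans hs.1))).symm

theorem intervalIntegrable_potential_mul (hq : LocallyIntegrableOn q (Ici 0))
    (hf : IsSol p q z (Ici 0) f f') {x y : ℝ} (hx : 0 ≤ x) (hy : 0 ≤ y) :
    IntervalIntegrable (fun t => ((q t : ℂ) - z) * f t) volume x y :=
  (hf.locallyIntegrableOn_potential_mul hq).intervalIntegrable_of_Ici hx hy

theorem intervalIntegrable_mul_add_mul (hq : LocallyIntegrableOn q (Ici 0))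
    (hf : IsSol p q z (Ici 0) f f') {v k : ℝ → ℂ} {x y : ℝ} (hx : 0 ≤ x) (hxy : x ≤ y)
    (hk : IntervalIntegrable k volume x y) (hv : ∀ t ∈ Icc x y, v t - v x = ∫ s in x..t, k s) :
    IntervalIntegrable (fun t => ((q t : ℂ) - z) * f t * v t + p t * f' t * k t) volume x y :=
  intervalIntegrable_mul_add_mul_of_sub_eq_integral (u := fun t => (p t : ℂ) * f' t) hxy
    (hf.intervalIntegrable_potential_mul hq hx (hx.trans hxy)) hk
    (fun t ht => hf.2 x hx t (hx.trans ht.1)) hv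

theorem integral_mul_add_mul_eq_sub (hq : LocallyIntegrableOn q (Ici 0))
    (hf : IsSol p q z (Ici 0) f f') {v k : ℝ → ℂ} {x y : ℝ} (hx : 0 ≤ x) (hxy : x ≤ y)
    (hk : IntervalIntegrable k volume x y) (hv : ∀ t ∈ Icc x y, v t - v x = ∫ s in x..t, k s) :
    ∫ t in x..y, (((q t : ℂ) - z) * f t * v t + p t * f' t * k t)
      = p y * f' y * v y - p x * f' x * v x :=
  integral_mul_add_mul_eq_sub_of_sub_eq_integral (u := fun t => (p t : ℂ) * f' t) hxy
    (hf.intervalIntegrable_potential_mul hq hx (hx.trans hxy)) hk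
    (fun t ht => hf.2 x hx t (hx.trans ht.1)) hv

theorem wronskian_eq_of_le (hp : ContinuousOn p (Ici 0)) (hp0 : ∀ x ∈ Ici (0:ℝ), p x ≠ 0)
    (hq : LocallyIntegrableOn q (Ici 0)) (hf : IsSol p q z (Ici 0) f f')
    (hg : IsSol p q z (Ici 0) g g') {x y : ℝ} (hx : 0 ≤ x) (hxy : x ≤ y) :
    (p y : ℂ) * (f' y * g y - f y * g' y) = p x * (f' x * g x - f x * g' x) := by
  have Ef := hf.integral_mul_add_mul_eq_sub hq hx hxy
    ((hg.continuousOn_deriv hp hp0 hq).intervalIntegrable_of_Ici hx (hx.trans hxy))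
    fun t ht => hg.sub_eq_integral_deriv hp hp0 hq hx ht.1
  have Eg := hg.integral_mul_add_mul_eq_sub hq hx hxy
    ((hf.continuousOn_deriv hp hp0 hq).intervalIntegrable_of_Ici hx (hx.trans hxy))
    fun t ht => hf.sub_eq_integral_deriv hp hp0 hq hx ht.1
  have hsymm : ∫ t in x..y, (((q t : ℂ) - z) * f t * g t + p t * f' t * g' t)
      = ∫ t in x..y, (((q t : ℂ) - z) * g t * f t + p t * g' t * f' t) :=
    integral_congr fun t _ => by ring
  linear_combination Eg - Ef + hsymm

end IsSol

theorem HasCompactSupport.exists_nonneg_forall_gt_eq_zero {E : Type*} [NormedAddCommGroup E]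
    {g : ℝ → E} (hg : HasCompactSupport g) : ∃ R, 0 ≤ R ∧ ∀ t ∈ Ioi R, g t = 0 := by
  obtain ⟨R, hR⟩ := hg.isCompact.bddAbove
  refine ⟨max R 0, le_max_right R 0, fun t ht => image_eq_zero_of_notMem_tsupport fun hmem => ?_⟩
  linarith [hR hmem, le_max_left R 0, mem_Ioi.1 ht]

section Resolvent

variable {p q : ℝ → ℝ} {z : ℂ} {θ θ' φ φ' g : ℝ → ℂ} {w : ℂ}

def resOpDeriv (θ θ' φ φ' g : ℝ → ℂ) (w : ℂ) (x : ℝ) : ℂ :=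
  w⁻¹ * (φ' x * ∫ y in Ioi x, θ y * g y) + w⁻¹ * (θ' x * ∫ y in (0:ℝ)..x, φ y * g y)

theorem resOp_zero (hφ0 : φ 0 = 0) : resOp θ φ g w 0 = 0 := by
  simp [resOp, hφ0]

theorem hasDerivWithinAt_resOp (hφ : ∀ x ∈ Ici (0:ℝ), HasDerivWithinAt φ (φ' x) (Ici 0) x)
    (hθ : ∀ x ∈ Ici (0:ℝ), HasDerivWithinAt θ (θ' x) (Ici 0) x) (hg : Continuous g)
    (hθg : IntegrableOn (fun y => θ y * g y) (Ioi 0)) {x : ℝ} (hx : x ∈ Ici 0) :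
    HasDerivWithinAt (resOp θ φ g w) (resOpDeriv θ θ' φ φ' g w x) (Ici 0) x := by
  have hφc : ContinuousOn φ (Ici 0) := fun x hx => (hφ x hx).continuousWithinAt
  have hθc : ContinuousOn θ (Ici 0) := fun x hx => (hθ x hx).continuousWithinAt
  have hA : HasDerivWithinAt (fun u => ∫ y in Ioi u, θ y * g y) (-(θ x * g x)) (Ici 0) x := by
    have hθgc : ContinuousOn (fun y => θ y * g y) (Ici 0) := hθc.mul hg.continuousOn
    refine ((hθgc.hasDerivWithinAt_primitive_Ici hx).const_sub
      (∫ y in Ioi 0, θ y * g y)).congr_of_mem (fun u hu => ?_) hx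
    rw [← integral_Ioi_sub_Ioi hθg hu, sub_sub_cancel]
  have hφgc : ContinuousOn (fun y => φ y * g y) (Ici 0) := hφc.mul hg.continuousOn
  have hB := hφgc.hasDerivWithinAt_primitive_Ici hx
  refine ((((hφ x hx).mul hA).const_mul w⁻¹).add
    (((hθ x hx).mul hB).const_mul w⁻¹)).congr_deriv ?_
  simp only [resOpDeriv]
  ring

theorem mul_resOpDeriv_sub_of_le (hq : LocallyIntegrableOn q (Ici 0))
    (hφ : IsSol p q z (Ici 0) φ φ') (hθ : IsSol p q z (Ici 0) θ θ')
    (hW : ∀ t ∈ Ici (0:ℝ), (p t : ℂ) * (φ' t * θ t - φ t * θ' t) = w) (hw : w ≠ 0)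
    (hg : Continuous g) (hθg : IntegrableOn (fun y => θ y * g y) (Ioi 0)) {x y : ℝ}
    (hx : 0 ≤ x) (hxy : x ≤ y) :
    (p y : ℂ) * resOpDeriv θ θ' φ φ' g w y - p x * resOpDeriv θ θ' φ φ' g w x
      = ∫ t in x..y, (((q t : ℂ) - z) * resOp θ φ g w t - g t) := by
  have hθg' : IntervalIntegrable (fun t => -(θ t * g t)) volume x y :=
    ((hθ.continuousOn.mul hg.continuousOn).intervalIntegrable_of_Ici hx (hx.trans hxy)).neg
  have hφgc : ContinuousOn (fun t => φ t * g t) (Ici 0) := hφ.continuousOn.mul hg.continuousOn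
  have hφg' := hφgc.intervalIntegrable_of_Ici hx (hx.trans hxy)
  have hA : ∀ t ∈ Icc x y, (∫ s in Ioi t, θ s * g s) - ∫ s in Ioi x, θ s * g s
      = ∫ s in x..t, -(θ s * g s) := fun t ht => sub_integral_Ioi_eq_integral_neg hθg hx ht.1
  have hB : ∀ t ∈ Icc x y, (∫ s in (0:ℝ)..t, φ s * g s) - ∫ s in (0:ℝ)..x, φ s * g s
      = ∫ s in x..t, φ s * g s := fun t ht =>
    integral_interval_sub_left (hφgc.intervalIntegrable_of_Ici le_rfl (hx.trans ht.1))
      (hφgc.intervalIntegrable_of_Ici le_rfl hx)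
  have E1 := hφ.integral_mul_add_mul_eq_sub hq hx hxy hθg' hA
  have E2 := hθ.integral_mul_add_mul_eq_sub hq hx hxy hφg' hB
  have I1 := hφ.intervalIntegrable_mul_add_mul hq hx hxy hθg' hA
  have I2 := hθ.intervalIntegrable_mul_add_mul hq hx hxy hφg' hB
  calc (p y : ℂ) * resOpDeriv θ θ' φ φ' g w y - p x * resOpDeriv θ θ' φ φ' g w x
      = w⁻¹ * ((p y * φ' y * ∫ s in Ioi y, θ s * g s) - p x * φ' x * ∫ s in Ioi x, θ s * g s)
        + w⁻¹ * ((p y * θ' y * ∫ s in (0:ℝ)..y, φ s * g s)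
          - p x * θ' x * ∫ s in (0:ℝ)..x, φ s * g s) := by
        simp only [resOpDeriv]
        ring
    _ = ∫ t in x..y, (w⁻¹ * (((q t : ℂ) - z) * φ t * (∫ s in Ioi t, θ s * g s)
          + p t * φ' t * -(θ t * g t))
        + w⁻¹ * (((q t : ℂ) - z) * θ t * (∫ s in (0:ℝ)..t, φ s * g s)
          + p t * θ' t * (φ t * g t))) := by
        rw [integral_add (I1.const_mul _) (I2.const_mul _), intervalIntegral.integral_const_mul,
          intervalIntegral.integral_const_mul, E1, E2]
    _ = ∫ t in x..y, (((q t : ℂ) - z) * resOp θ φ g w t - g t) := by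
        refine integral_congr fun t ht => ?_
        have hWt := hW t ((le_min hx (hx.trans hxy)).trans ht.1)
        have hinv : w⁻¹ * w = 1 := inv_mul_cancel₀ hw
        simp only [resOp]
        linear_combination (-(g t) * w⁻¹) * hWt - g t * hinv

theorem mul_resOpDeriv_sub (hq : LocallyIntegrableOn q (Ici 0))
    (hφ : IsSol p q z (Ici 0) φ φ') (hθ : IsSol p q z (Ici 0) θ θ')
    (hW : ∀ t ∈ Ici (0:ℝ), (p t : ℂ) * (φ' t * θ t - φ t * θ' t) = w) (hw : w ≠ 0)
    (hg : Continuous g) (hθg : IntegrableOn (fun y => θ y * g y) (Ioi 0)) {x y : ℝ}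
    (hx : x ∈ Ici 0) (hy : y ∈ Ici 0) :
    (p y : ℂ) * resOpDeriv θ θ' φ φ' g w y - p x * resOpDeriv θ θ' φ φ' g w x
      = ∫ t in x..y, (((q t : ℂ) - z) * resOp θ φ g w t - g t) := by
  rcases le_total x y with hxy | hyx
  · exact mul_resOpDeriv_sub_of_le hq hφ hθ hW hw hg hθg hx hxy
  · rw [integral_symm, ← mul_resOpDeriv_sub_of_le hq hφ hθ hW hw hg hθg hy hyx, neg_sub]

theorem resOp_eq_mul_of_lt (hφ : ContinuousOn φ (Ici 0)) (hg : Continuous g) {R : ℝ}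
    (hR : 0 ≤ R) (hgR : ∀ t ∈ Ioi R, g t = 0) {x : ℝ} (hx : R < x) :
    resOp θ φ g w x = w⁻¹ * (∫ t in (0:ℝ)..R, φ t * g t) * θ x := by
  have hφg : ContinuousOn (fun t => φ t * g t) (Ici 0) := hφ.mul hg.continuousOn
  have htail : ∫ t in Ioi x, θ t * g t = 0 :=
    setIntegral_eq_zero_of_forall_eq_zero fun t ht => by rw [hgR t (hx.trans ht), mul_zero]
  have hmid : ∫ t in R..x, φ t * g t = 0 := by
    rw [integral_of_le hx.le]
    exact setIntegral_eq_zero_of_forall_eq_zero fun t ht => by rw [hgR t ht.1, mul_zero]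
  rw [resOp, htail, ← integral_add_adjacent_intervals (hφg.intervalIntegrable_of_Ici le_rfl hR)
    (hφg.intervalIntegrable_of_Ici hR (hR.trans hx.le)), hmid]
  ring

theorem integrableOn_sq_resOp (hf : ContinuousOn (resOp θ φ g w) (Ici 0))
    (hφ : ContinuousOn φ (Ici 0)) (hg : Continuous g) {R : ℝ} (hR : 0 ≤ R)
    (hgR : ∀ t ∈ Ioi R, g t = 0) (hθ : IntegrableOn (fun x => ‖θ x‖ ^ 2) (Ioi 0)) :
    IntegrableOn (fun x => ‖resOp θ φ g w x‖ ^ 2) (Ioi 0) :=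
  integrableOn_Ioi_of_continuousOn_Icc hR ((hf.mono Icc_subset_Ici_self).norm.pow 2) <|
    (integrableOn_congr_fun (fun x hx => by rw [resOp_eq_mul_of_lt hφ hg hR hgR hx, norm_mul,
      mul_pow]) measurableSet_Ioi).2 ((hθ.mono_set (Ioi_subset_Ioi hR)).const_mul _)

end Resolvent

theorem statement18_general (p p' q q' : ℝ → ℝ) (p₀ x₀ : ℝ)
    (hPQ : PQData p p' q q' p₀ x₀)
    (z : ℂ)
    (φ φ' : ℝ → ℂ)
    (hsolφ : IsSol p q z (Ici 0) φ φ')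
    (h0 : φ 0 = 0) (h0' : φ' 0 = 1)
    (θ θ' : ℝ → ℂ)
    (hsolθ : IsSol p q z (Ici 0) θ θ')
    (hθL2 : IntegrableOn (fun x => ‖θ x‖ ^ 2) (Ioi (0:ℝ)))
    (hw : (p 0 : ℂ) * θ 0 ≠ 0)
    (g : ℝ → ℂ) (hg : Continuous g) (hgsupp : HasCompactSupport g) :
    resOp θ φ g ((p 0 : ℂ) * θ 0) 0 = 0 ∧
      (∃ F' : ℝ → ℂ,
        (∀ x ∈ Ici (0:ℝ),
          HasDerivWithinAt (resOp θ φ g ((p 0 : ℂ) * θ 0)) (F' x) (Ici 0) x) ∧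
        ∀ x ∈ Ici (0:ℝ), ∀ y ∈ Ici (0:ℝ),
          (p y : ℂ) * F' y - (p x : ℂ) * F' x
            = ∫ t in x..y,
                (((q t : ℂ) - z) * resOp θ φ g ((p 0 : ℂ) * θ 0) t - g t)) ∧
      IntegrableOn (fun x => ‖resOp θ φ g ((p 0 : ℂ) * θ 0) x‖ ^ 2) (Ioi (0:ℝ)) := by
  have hp := hPQ.continuousOn_p
  have hp0 : ∀ x ∈ Ici (0:ℝ), p x ≠ 0 := fun x hx => (hPQ.p_pos x hx).ne'
  have hq := hPQ.locallyIntegrableOn_q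
  obtain ⟨R, hR, hgR⟩ := hgsupp.exists_nonneg_forall_gt_eq_zero
  have hW : ∀ t ∈ Ici (0:ℝ), (p t : ℂ) * (φ' t * θ t - φ t * θ' t) = p 0 * θ 0 := fun t ht => by
    simpa [h0, h0'] using hsolφ.wronskian_eq_of_le hp hp0 hq hsolθ le_rfl ht
  have hθg : IntegrableOn (fun y => θ y * g y) (Ioi 0) :=
    integrableOn_Ioi_of_continuousOn_Icc hR
      ((hsolθ.continuousOn.mul hg.continuousOn).mono Icc_subset_Ici_self)
      ((integrableOn_congr_fun (fun t ht => by rw [hgR t ht, mul_zero]) measurableSet_Ioi).2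
        integrableOn_zero)
  have hderiv := fun x (hx : x ∈ Ici (0:ℝ)) =>
    hasDerivWithinAt_resOp (w := p 0 * θ 0) hsolφ.1 hsolθ.1 hg hθg hx
  exact ⟨resOp_zero h0,
    ⟨_, hderiv, fun x hx y hy => mul_resOpDeriv_sub hq hsolφ hsolθ hW hw hg hθg hx hy⟩,
    integrableOn_sq_resOp (fun x hx => (hderiv x hx).continuousWithinAt) hsolφ.continuousOn hg hR
      hgR hθL2⟩

/-- for `Im z ≠ 0`, with `φ` the regular solution (`φ(0) = 0`, `φ'(0) = 1`),
`θ` a square-integrable solution with `w = p(0)θ(0) ≠ 0`, and `g` continuous with compact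
support, the function `f = resOp θ φ g w` satisfies `f(0) = 0`, `f` and `p·f'` are locally
absolutely continuous on `[0,∞)`, `−(pf')' + qf − zf = g` a.e. on `(0,∞)` (encoded via the
FTC representation of `p·f'`), and `f` is square integrable on `(0,∞)`. -/
theorem statement18 (p p' q q' : ℝ → ℝ) (p₀ x₀ : ℝ)
    (hPQ : PQData p p' q q' p₀ x₀)
    (z : ℂ) (hz : z.im ≠ 0)
    (φ φ' : ℝ → ℂ)
    (hsolφ : IsSol p q z (Ici 0) φ φ')
    (h0 : φ 0 = 0) (h0' : φ' 0 = 1)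
    (θ θ' : ℝ → ℂ)
    (hsolθ : IsSol p q z (Ici 0) θ θ')
    (hθL2 : IntegrableOn (fun x => ‖θ x‖ ^ 2) (Ioi (0:ℝ)))
    (hw : (p 0 : ℂ) * θ 0 ≠ 0)
    (g : ℝ → ℂ) (hg : Continuous g) (hgsupp : HasCompactSupport g) :
    resOp θ φ g ((p 0 : ℂ) * θ 0) 0 = 0 ∧
      (∃ F' : ℝ → ℂ,
        (∀ x ∈ Ici (0:ℝ),
          HasDerivWithinAt (resOp θ φ g ((p 0 : ℂ) * θ 0)) (F' x) (Ici 0) x) ∧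
        ∀ x ∈ Ici (0:ℝ), ∀ y ∈ Ici (0:ℝ),
          (p y : ℂ) * F' y - (p x : ℂ) * F' x
            = ∫ t in x..y,
                (((q t : ℂ) - z) * resOp θ φ g ((p 0 : ℂ) * θ 0) t - g t)) ∧
      IntegrableOn (fun x => ‖resOp θ φ g ((p 0 : ℂ) * θ 0) x‖ ^ 2) (Ioi (0:ℝ)) :=
  statement18_general p p' q q' p₀ x₀ hPQ z φ φ' hsolφ h0 h0' θ θ' hsolθ hθL2 hw g hg hgsupp

end
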